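/- Let ψ be the inverse of φ in the Keller–Osserman setup. Then 2/M ≤ v |ψ'(v)| / ψ(v) ≤ 2/m for all v > 0. -/

import Mathlib

/-!
Differentiating `t f t - (2 + m) F t` and `(2 + M) F t - t f t` shows
`(2 + m) F ≤ t f ≤ (2 + M) F`, i.e. `F t / t ^ (2 + m)` increases and `F t / t ^ (2 + M)`
decreases. With `u = ψ v` this gives `F u (t/u) ^ (2 + m) ≤ F t ≤ F u (t/u) ^ (2 + M)` for
`t ≥ u`, and integrating `1 / √F` over `(u, ∞)` against these power laws yields
`2u / (M √F u) ≤ v ≤ 2u / (m √F u)`, while `|ψ' v| = √F u`.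
-/

open Set Real MeasureTheory

theorem intervalIntegrable_zero_of_continuousOn_Ici {f : ℝ → ℝ} {t : ℝ}
    (hf : ContinuousOn f (Ici 0)) (ht : 0 ≤ t) : IntervalIntegrable f volume 0 t :=
  (hf.mono (by rw [uIcc_of_le ht]; exact Icc_subset_Ici_self)).intervalIntegrable

theorem hasDerivAt_integral_zero_of_continuousOn_Ici {f : ℝ → ℝ} {t : ℝ}
    (hf : ContinuousOn f (Ici 0)) (ht : 0 < t) :
    HasDerivAt (fun x => ∫ τ in (0:ℝ)..x, f τ) (f t) t :=
  intervalIntegral.integral_hasDerivAt_right (intervalIntegrable_zero_of_continuousOn_Ici hf ht.le)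
    ((hf.mono Ioi_subset_Ici_self).stronglyMeasurableAtFilter isOpen_Ioi t ht)
    (hf.continuousAt (Ici_mem_nhds ht))

theorem mul_integral_le_of_le_mul_deriv {f f' : ℝ → ℝ} {c t : ℝ}
    (hf : ContinuousOn f (Ici 0)) (hf' : ∀ x ∈ Ioi (0:ℝ), HasDerivAt f (f' x) x)
    (h : ∀ x ∈ Ioi (0:ℝ), (1 + c) * f x ≤ x * f' x) (ht : 0 ≤ t) :
    (2 + c) * ∫ τ in (0:ℝ)..t, f τ ≤ t * f t := by
  set G : ℝ → ℝ := fun x => x * f x - (2 + c) * ∫ τ in (0:ℝ)..x, f τ with hG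
  have hfIcc : ContinuousOn f (Icc 0 t) := hf.mono Icc_subset_Ici_self
  have hGcont : ContinuousOn G (Icc 0 t) := by
    have hprim := intervalIntegral.continuousOn_primitive_interval
      (hfIcc.integrableOn_compact (μ := volume) isCompact_Icc |>.mono_set (uIcc_of_le ht).subset)
    rw [uIcc_of_le ht] at hprim
    exact (continuousOn_id.mul hfIcc).sub (continuousOn_const.mul hprim)
  have hGderiv : ∀ x ∈ interior (Icc 0 t),
      HasDerivWithinAt G (x * f' x - (1 + c) * f x) (interior (Icc 0 t)) x := by
    intro x hx
    rw [interior_Icc] at hx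
    have hd := ((hasDerivAt_id x).mul (hf' x hx.1)).sub
      ((hasDerivAt_integral_zero_of_continuousOn_Ici hf hx.1).const_mul (2 + c))
    exact (hd.congr_deriv (by simp only [id]; ring)).hasDerivWithinAt
  have hmono := monotoneOn_of_hasDerivWithinAt_nonneg (convex_Icc 0 t) hGcont hGderiv
    (fun x hx => by rw [interior_Icc] at hx; linarith [h x hx.1])
  have hG0t := hmono (left_mem_Icc.2 ht) (right_mem_Icc.2 ht) ht
  simp only [hG, zero_mul, intervalIntegral.integral_same, mul_zero, sub_zero] at hG0t
  linarith

theorem le_mul_integral_of_mul_deriv_le {f f' : ℝ → ℝ} {c t : ℝ}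
    (hf : ContinuousOn f (Ici 0)) (hf' : ∀ x ∈ Ioi (0:ℝ), HasDerivAt f (f' x) x)
    (h : ∀ x ∈ Ioi (0:ℝ), x * f' x ≤ (1 + c) * f x) (ht : 0 ≤ t) :
    t * f t ≤ (2 + c) * ∫ τ in (0:ℝ)..t, f τ := by
  have hneg := mul_integral_le_of_le_mul_deriv (f := -f) (f' := -f') (c := c) hf.neg
    (fun x hx => (hf' x hx).neg) (fun x hx => by simp only [Pi.neg_apply]; linarith [h x hx]) ht
  simp only [Pi.neg_apply, intervalIntegral.integral_neg] at hneg
  linarith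

theorem monotoneOn_mul_rpow_neg {F f : ℝ → ℝ} {k : ℝ}
    (hF : ∀ x ∈ Ioi (0:ℝ), HasDerivAt F (f x) x) (h : ∀ x ∈ Ioi (0:ℝ), k * F x ≤ x * f x) :
    MonotoneOn (fun x => F x * x ^ (-k)) (Ioi 0) := by
  have hd : ∀ x ∈ Ioi (0:ℝ), HasDerivAt (fun x => F x * x ^ (-k))
      (x ^ (-k - 1) * (x * f x - k * F x)) x := by
    intro x hx
    have hx0 : (0:ℝ) < x := hx
    have hsplit : x ^ (-k) = x ^ (-k - 1) * x := by
      rw [← rpow_add_one hx0.ne']; norm_num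
    refine ((hF x hx).mul (hasDerivAt_rpow_const (p := -k) (Or.inl hx0.ne'))).congr_deriv ?_
    rw [hsplit]
    ring
  refine monotoneOn_of_hasDerivWithinAt_nonneg (convex_Ioi 0)
    (fun x hx => (hd x hx).continuousAt.continuousWithinAt)
    (fun x hx => (hd x (interior_subset hx)).hasDerivWithinAt) (fun x hx => ?_)
  rw [interior_Ioi] at hx
  exact mul_nonneg (rpow_nonneg (le_of_lt hx) _) (by linarith [h x hx])

theorem mul_div_rpow_le_of_mul_le {F f : ℝ → ℝ} {k u t : ℝ}
    (hF : ∀ x ∈ Ioi (0:ℝ), HasDerivAt F (f x) x) (h : ∀ x ∈ Ioi (0:ℝ), k * F x ≤ x * f x)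
    (hu : 0 < u) (hut : u ≤ t) :
    F u * (t / u) ^ k ≤ F t := by
  have ht : 0 < t := hu.trans_le hut
  have hmono : F u * u ^ (-k) ≤ F t * t ^ (-k) := monotoneOn_mul_rpow_neg hF h hu ht hut
  calc F u * (t / u) ^ k = F u * u ^ (-k) * t ^ k := by
        rw [div_rpow ht.le hu.le, rpow_neg hu.le]; ring
    _ ≤ F t * t ^ (-k) * t ^ k := mul_le_mul_of_nonneg_right hmono (rpow_nonneg ht.le _)
    _ = F t := by rw [mul_assoc, ← rpow_add ht, neg_add_cancel, rpow_zero, mul_one]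

theorem le_mul_div_rpow_of_mul_le {F f : ℝ → ℝ} {k u t : ℝ}
    (hF : ∀ x ∈ Ioi (0:ℝ), HasDerivAt F (f x) x) (h : ∀ x ∈ Ioi (0:ℝ), x * f x ≤ k * F x)
    (hu : 0 < u) (hut : u ≤ t) :
    F t ≤ F u * (t / u) ^ k := by
  have hneg := mul_div_rpow_le_of_mul_le (F := -F) (f := -f) (k := k)
    (fun x hx => (hF x hx).neg) (fun x hx => by simp only [Pi.neg_apply]; linarith [h x hx]) hu hut
  simp only [Pi.neg_apply] at hneg
  linarith

theorem div_rpow_eqOn_Ioi {u p : ℝ} (hu : 0 < u) :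
    EqOn (fun t => (u / t) ^ p) (fun t => u ^ p * t ^ (-p)) (Ioi u) := fun t ht => by
  simp only
  rw [div_rpow hu.le (hu.trans ht).le, rpow_neg (hu.trans ht).le, div_eq_mul_inv]

theorem integrableOn_Ioi_div_rpow {u p : ℝ} (hu : 0 < u) (hp : 1 < p) :
    IntegrableOn (fun t => (u / t) ^ p) (Ioi u) :=
  (integrableOn_congr_fun (div_rpow_eqOn_Ioi hu) measurableSet_Ioi).2
    ((integrableOn_Ioi_rpow_of_lt (by linarith) hu).const_mul _)

theorem integral_Ioi_div_rpow {u p : ℝ} (hu : 0 < u) (hp : 1 < p) :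
    ∫ t in Ioi u, (u / t) ^ p = u / (p - 1) := by
  rw [setIntegral_congr_fun measurableSet_Ioi (div_rpow_eqOn_Ioi hu), integral_const_mul,
    integral_Ioi_rpow_of_lt (by linarith) hu]
  have hpow : u ^ p * u ^ (-p + 1) = u := by
    rw [← rpow_add hu, add_neg_cancel_left, rpow_one]
  have hp' : -p + 1 ≠ 0 := by linarith
  have hp'' : p - 1 ≠ 0 := by linarith
  calc u ^ p * (-u ^ (-p + 1) / (-p + 1)) = u ^ p * u ^ (-p + 1) / (p - 1) := by
        field_simp; ring
    _ = u / (p - 1) := by rw [hpow]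

theorem one_div_sqrt_mul_div_rpow {a u t : ℝ} (k : ℝ) (ha : 0 ≤ a) (hu : 0 < u) (ht : 0 < t) :
    1 / √(a * (t / u) ^ k) = (u / t) ^ (k / 2) / √a := by
  rw [sqrt_mul ha, sqrt_eq_rpow ((t / u) ^ k), ← rpow_mul (div_pos ht hu).le, ← inv_div t u,
    inv_rpow (div_pos ht hu).le]
  ring_nf

theorem integral_Ioi_one_div_sqrt_le {F : ℝ → ℝ} {u c : ℝ} (hu : 0 < u) (hc : 0 < c)
    (hFu : 0 < F u) (h : ∀ t ∈ Ioi u, F u * (t / u) ^ (2 + c) ≤ F t) :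
    ∫ t in Ioi u, 1 / √(F t) ≤ 2 * u / (c * √(F u)) := by
  have hp : 1 < (2 + c) / 2 := by linarith
  have hbound : ∀ t ∈ Ioi u, 1 / √(F t) ≤ (u / t) ^ ((2 + c) / 2) / √(F u) := fun t ht => by
    rw [← one_div_sqrt_mul_div_rpow _ hFu.le hu (hu.trans ht)]
    exact one_div_le_one_div_of_le
      (sqrt_pos.2 (mul_pos hFu (rpow_pos_of_pos (div_pos (hu.trans ht) hu) _)))
      (sqrt_le_sqrt (h t ht))
  calc ∫ t in Ioi u, 1 / √(F t)
      ≤ ∫ t in Ioi u, (u / t) ^ ((2 + c) / 2) / √(F u) :=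
        integral_mono_of_nonneg (Filter.Eventually.of_forall fun t => by positivity)
          ((integrableOn_Ioi_div_rpow hu hp).div_const _)
          ((ae_restrict_iff' measurableSet_Ioi).2 (Filter.Eventually.of_forall hbound))
    _ = 2 * u / (c * √(F u)) := by
        have hS : 0 < √(F u) := sqrt_pos.2 hFu
        rw [integral_div, integral_Ioi_div_rpow hu hp, show (2 + c) / 2 - 1 = c / 2 by ring]
        field_simp

theorem le_integral_Ioi_one_div_sqrt {F : ℝ → ℝ} {u c : ℝ} (hu : 0 < u) (hc : 0 < c)
    (hpos : ∀ t ∈ Ici u, 0 < F t) (hint : IntegrableOn (fun t => 1 / √(F t)) (Ioi u))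
    (h : ∀ t ∈ Ioi u, F t ≤ F u * (t / u) ^ (2 + c)) :
    2 * u / (c * √(F u)) ≤ ∫ t in Ioi u, 1 / √(F t) := by
  have hp : 1 < (2 + c) / 2 := by linarith
  have hbound : ∀ t ∈ Ioi u, (u / t) ^ ((2 + c) / 2) / √(F u) ≤ 1 / √(F t) := fun t ht => by
    rw [← one_div_sqrt_mul_div_rpow _ (hpos u self_mem_Ici).le hu (hu.trans ht)]
    exact one_div_le_one_div_of_le (sqrt_pos.2 (hpos t (Ioi_subset_Ici_self ht)))
      (sqrt_le_sqrt (h t ht))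
  calc 2 * u / (c * √(F u)) = ∫ t in Ioi u, (u / t) ^ ((2 + c) / 2) / √(F u) := by
        have hS : 0 < √(F u) := sqrt_pos.2 (hpos u self_mem_Ici)
        rw [integral_div, integral_Ioi_div_rpow hu hp, show (2 + c) / 2 - 1 = c / 2 by ring]
        field_simp
    _ ≤ ∫ t in Ioi u, 1 / √(F t) :=
        setIntegral_mono_on ((integrableOn_Ioi_div_rpow hu hp).div_const _) hint
          measurableSet_Ioi hbound

theorem stmt_10_general (f f' : ℝ → ℝ) (m M : ℝ) (hm : 0 < m) (hmM : m < M)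
    (hcont : ContinuousOn f (Ici 0))
    (hderiv : ∀ t ∈ Ioi (0:ℝ), HasDerivAt f (f' t) t)
    (hpos : ∀ t ∈ Ioi (0:ℝ), 0 < f t)
    (h : ∀ t ∈ Ioi (0:ℝ), (1 + m) * f t ≤ t * f' t ∧ t * f' t ≤ (1 + M) * f t)
    (F φ ψ ψ' : ℝ → ℝ) (hF : ∀ t, F t = ∫ τ in (0:ℝ)..t, f τ)
    (hφ : ∀ u, φ u = ∫ t in Ioi u, 1 / Real.sqrt (F t))
    (hψpos : ∀ v ∈ Ioi (0:ℝ), 0 < ψ v)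
    (hinv2 : ∀ v ∈ Ioi (0:ℝ), φ (ψ v) = v)
    (hψ' : ∀ v ∈ Ioi (0:ℝ), ψ' v = -Real.sqrt (F (ψ v))) :
    ∀ v ∈ Ioi (0:ℝ), 2 / M ≤ v * |ψ' v| / ψ v ∧ v * |ψ' v| / ψ v ≤ 2 / m := by
  intro v hv
  have hM : 0 < M := hm.trans hmM
  have hFderiv : ∀ t ∈ Ioi (0:ℝ), HasDerivAt F (f t) t := fun t ht => by
    simpa only [← hF] using hasDerivAt_integral_zero_of_continuousOn_Ici hcont ht
  have hFpos : ∀ t ∈ Ioi (0:ℝ), 0 < F t := fun t ht => hF t ▸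
    intervalIntegral.intervalIntegral_pos_of_pos_on
      (intervalIntegrable_zero_of_continuousOn_Ici hcont ht.le)
      (fun x hx => hpos x hx.1) ht
  set u := ψ v
  have hu : 0 < u := hψpos v hv
  have hv_eq : ∫ t in Ioi u, 1 / √(F t) = v := (hφ u).symm.trans (hinv2 v hv)
  have hgrowth_lower : ∀ t ∈ Ioi u, F u * (t / u) ^ (2 + m) ≤ F t := fun t ht =>
    mul_div_rpow_le_of_mul_le hFderiv (fun x hx => hF x ▸
      mul_integral_le_of_le_mul_deriv hcont hderiv (fun y hy => (h y hy).1) (le_of_lt hx)) hu ht.le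
  have hgrowth_upper : ∀ t ∈ Ioi u, F t ≤ F u * (t / u) ^ (2 + M) := fun t ht =>
    le_mul_div_rpow_of_mul_le hFderiv (fun x hx => hF x ▸
      le_mul_integral_of_mul_deriv_le hcont hderiv (fun y hy => (h y hy).2) (le_of_lt hx)) hu ht.le
  have hupper := integral_Ioi_one_div_sqrt_le hu hm (hFpos u hu) hgrowth_lower
  have hlower := le_integral_Ioi_one_div_sqrt hu hM
    (fun t ht => hFpos t (hu.trans_le ht))
    (Integrable.of_integral_ne_zero (hv_eq ▸ hv.ne')) hgrowth_upper
  rw [hv_eq] at hupper hlower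
  have hS : 0 < √(F u) := sqrt_pos.2 (hFpos u hu)
  rw [hψ' v hv, abs_neg, abs_of_nonneg hS.le]
  rw [div_le_iff₀ (mul_pos hM hS)] at hlower
  rw [le_div_iff₀ (mul_pos hm hS)] at hupper
  constructor
  · rw [le_div_iff₀ hu, div_mul_eq_mul_div, div_le_iff₀ hM]
    linarith
  · rw [div_le_div_iff₀ hu hm]
    linarith

theorem stmt_10 (f f' : ℝ → ℝ) (m M : ℝ) (hm : 0 < m) (hmM : m < M)
    (hcont : ContinuousOn f (Ici 0))
    (hderiv : ∀ t ∈ Ioi (0:ℝ), HasDerivAt f (f' t) t)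
    (hmono : MonotoneOn f (Ici 0))
    (hf0 : f 0 = 0)
    (hpos : ∀ t ∈ Ioi (0:ℝ), 0 < f t)
    (h : ∀ t ∈ Ioi (0:ℝ), (1 + m) * f t ≤ t * f' t ∧ t * f' t ≤ (1 + M) * f t)
    (F φ ψ ψ' : ℝ → ℝ) (hF : ∀ t, F t = ∫ τ in (0:ℝ)..t, f τ)
    (hφ : ∀ u, φ u = ∫ t in Ioi u, 1 / Real.sqrt (F t))
    (hψpos : ∀ v ∈ Ioi (0:ℝ), 0 < ψ v)
    (hinv1 : ∀ u ∈ Ioi (0:ℝ), ψ (φ u) = u)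
    (hinv2 : ∀ v ∈ Ioi (0:ℝ), φ (ψ v) = v)
    (hψderiv : ∀ v ∈ Ioi (0:ℝ), HasDerivAt ψ (ψ' v) v)
    (hψ' : ∀ v ∈ Ioi (0:ℝ), ψ' v = -Real.sqrt (F (ψ v))) :
    ∀ v ∈ Ioi (0:ℝ), 2 / M ≤ v * |ψ' v| / ψ v ∧ v * |ψ' v| / ψ v ≤ 2 / m :=
  stmt_10_general f f' m M hm hmM hcont hderiv hpos h F φ ψ ψ' hF hφ hψpos hinv2 hψ'
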